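/- For any suffix of W_{k,n} of the form a_i w (i.e., W_{k,n} = u a_i w for some word u), the word w is not accepted by A_{k,n} starting from state (k+1; i). -/

import Mathlib

/-- The word `W k n` over alphabet {1,...,n} (letter `a_i` encoded as `i`):
`W k 1 = a1^k`, `W 1 n = a1 a2 ... an`, `W k n = W k (n-1) ++ [a_n] ++ W (k-1) n`,
and `W k n = ε` when `k = 0` or `n = 0`. -/
def W : ℕ → ℕ → List ℕ
  | 0, _ => []
  | _+1, 0 => []
  | k+1, n+1 => W (k+1) n ++ (n+1) :: W k (n+1)
termination_by k n => k + n

/-- States of the automaton `A_{k,n}`: `some (j, m)` is the state `(j; m)`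
(`0 ≤ j ≤ 2k`, `1 ≤ m ≤ n`), and `none` is the sink state `max`. -/
abbrev ASt : Type := Option (ℕ × ℕ)

/-- The transition function of `A_{k,n}` (closed form of rules 1–6 of the paper):
from `(j;m)` under `a_l`: a self-loop if `l < m`; if `l = m` then to `(j+1;m')`
for all `m' ≤ m` when `j < k`, to `max` when `j ∈ {k, 2k}`, and to `(j+1;m)`
otherwise; if `l > m` then to `max` when `(j;m)` is accepting (`j < k`) and to
`(k+1; l)` otherwise. `max` has self-loops under all letters. -/
def Astep (k : ℕ) : ASt → ℕ → Set ASt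
  | none, _ => {none}
  | some (j, m), l =>
    if l < m then {some (j, m)}
    else if l = m then
      if j < k then {s | ∃ m', 1 ≤ m' ∧ m' ≤ m ∧ s = some (j+1, m')}
      else if j = k ∨ j = 2*k then {none}
      else {some (j+1, m)}
    else
      if j < k then {none} else {some (k+1, l)}

/-- The ptNFA `A_{k,n}` over `Σ_n = {1,...,n}`, with initial states `(0;m)` and
accepting states `max` and the `(j;m)` with `j < k`. -/
def Aaut (k n : ℕ) : NFA ℕ ASt where
  step := Astep k
  start := {s | ∃ m, 1 ≤ m ∧ m ≤ n ∧ s = some (0, m)}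
  accept := {none} ∪ {s | ∃ j m, j < k ∧ 1 ≤ m ∧ m ≤ n ∧ s = some (j, m)}

/-!
From a state `(j; m)` with `j > k` the automaton is deterministic: it keeps
`j - k` equal to the number of `a_m` read since the last letter larger than `a_m`, jumps to
`(k+1; l)` on a larger letter `a_l`, and dies only on the `(k+1)`-st such `a_m`. Starting from
`(k+1; i)` after `a_i`, the run therefore either ends in a non-accepting state `(j; m)` with
`j > k`, or it exhibits a factor of `a_i w` whose largest letter occurs `k + 1` times. No factor of
`W_{k,n}` has this shape: for a largest letter `a_m` with `m ≥ n` this is the count of `a_m` in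
`W_{k,n}`, and for `m < n` the factor avoids `a_n`, so it lies in `W_{k,n-1}` or in `W_{k-1,n}`.
-/

namespace List

theorem eq_nil_of_prefix_cons_of_notMem {α : Type*} {l B : List α} {b : α}
    (h : l <+: b :: B) (hb : b ∉ l) : l = [] := by
  cases l with
  | nil => rfl
  | cons x l => exact absurd (List.cons_prefix_cons.mp h).1 (fun hx => hb (hx ▸ mem_cons_self))

theorem infix_or_infix_of_infix_append_cons {α : Type*} {t A B : List α} {b : α}
    (h : t <:+: A ++ b :: B) (hb : b ∉ t) : t <:+: A ∨ t <:+: B := by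
  rcases infix_append_iff.mp h with hA | hbB | ⟨l₁, l₂, rfl, hl₁, hl₂⟩
  · exact Or.inl hA
  · rcases infix_cons_iff.mp hbB with hpre | hB
    · rw [eq_nil_of_prefix_cons_of_notMem hpre hb]
      exact Or.inl nil_infix
    · exact Or.inr hB
  · have hl₂nil : l₂ = [] :=
      eq_nil_of_prefix_cons_of_notMem hl₂ (fun h => hb (mem_append_right _ h))
    subst hl₂nil
    exact Or.inl (by simpa using hl₁.isInfix)

end List

def TopCountLE (k : ℕ) (s : List ℕ) : Prop :=
  ∀ t, t <:+: s → ∀ m, (∀ x ∈ t, x ≤ m) → t.count m ≤ k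

theorem TopCountLE.of_infix {k : ℕ} {s s' : List ℕ} (h : TopCountLE k s) (hs : s' <:+: s) :
    TopCountLE k s' :=
  fun t ht => h t (ht.trans hs)

theorem TopCountLE.mono {k k' : ℕ} {s : List ℕ} (h : TopCountLE k s) (hk : k ≤ k') :
    TopCountLE k' s :=
  fun t ht m hm => (h t ht m hm).trans hk

theorem W_zero_left (n : ℕ) : W 0 n = [] := by simp [W]

theorem W_zero_right (k : ℕ) : W k 0 = [] := by cases k <;> simp [W]

theorem W_succ_succ (k n : ℕ) : W (k + 1) (n + 1) = W (k + 1) n ++ (n + 1) :: W k (n + 1) := by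
  rw [W]

theorem le_of_mem_W {k n x : ℕ} (hx : x ∈ W k n) : x ≤ n := by
  induction k, n using W.induct with
  | case1 n => simp [W_zero_left] at hx
  | case2 k => simp [W_zero_right] at hx
  | case3 k n ih₁ ih₂ =>
    rw [W_succ_succ, List.mem_append, List.mem_cons] at hx
    rcases hx with hx | rfl | hx
    · exact (ih₁ hx).trans n.le_succ
    · exact le_refl _
    · exact ih₂ hx

theorem count_W_le {k n m : ℕ} (hm : n ≤ m) : (W k n).count m ≤ k := by
  induction k, n using W.induct with
  | case1 n => simp [W_zero_left]
  | case2 k => simp [W_zero_right]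
  | case3 k n _ ih₂ =>
    have hA : (W (k + 1) n).count m = 0 :=
      List.count_eq_zero.mpr fun h => by have := le_of_mem_W h; omega
    rw [W_succ_succ, List.count_append, List.count_cons, hA]
    have := ih₂ hm
    split <;> omega

theorem topCountLE_W (k n : ℕ) : TopCountLE k (W k n) := by
  induction k, n using W.induct with
  | case1 n =>
    intro t ht
    rw [W_zero_left] at ht
    simp [List.eq_nil_of_infix_nil ht]
  | case2 k =>
    intro t ht
    rw [W_zero_right] at ht
    simp [List.eq_nil_of_infix_nil ht]
  | case3 k n ih₁ ih₂ =>
    intro t ht m hm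
    by_cases hnm : n + 1 ≤ m
    · exact (ht.count_le m).trans (count_W_le hnm)
    · have hnt : n + 1 ∉ t := fun h => hnm (hm _ h)
      rw [W_succ_succ] at ht
      rcases List.infix_or_infix_of_infix_append_cons ht hnt with hA | hB
      · exact ih₁ t hA m hm
      · exact (ih₂.mono k.le_succ) t hB m hm

theorem Aaut_evalFrom_cons {k n : ℕ} (s : ASt) (l : ℕ) (w : List ℕ) :
    (Aaut k n).evalFrom {s} (l :: w) = (Aaut k n).evalFrom (Astep k s l) w := by
  rw [NFA.evalFrom_cons, NFA.stepSet_singleton]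
  rfl

theorem Astep_of_lt {k j : ℕ} (hj : k < j) (m l : ℕ) :
    Astep k (some (j, m)) l =
      if l < m then {some (j, m)}
      else if l = m then (if j = 2 * k then {none} else {some (j + 1, m)})
      else {some (k + 1, l)} := by
  simp only [Astep, if_neg (Nat.not_lt.mpr hj.le), hj.ne', false_or]

theorem Aaut_some_notMem_accept {k n j : ℕ} (hj : k < j) (m : ℕ) :
    some (j, m) ∉ (Aaut k n).accept := by
  rintro (h | ⟨j', m', hj', -, -, h⟩)
  · cases h
  · cases h
    omega

/-- Invariant of the run: `p` is the input read since the last letter larger than `m`. -/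
theorem notMem_accept_of_topCountLE {k n j m : ℕ} {p w : List ℕ} (hp : ∀ x ∈ p, x ≤ m)
    (hmp : m ∈ p) (hj : j = k + p.count m) (hpw : TopCountLE k (p ++ w)) :
    ∀ f ∈ (Aaut k n).evalFrom {some (j, m)} w, f ∉ (Aaut k n).accept := by
  induction w generalizing p j m with
  | nil =>
    intro f hf
    rw [NFA.evalFrom_nil, Set.mem_singleton_iff] at hf
    subst hf
    exact Aaut_some_notMem_accept (by rw [hj]; simpa using List.count_pos_iff.mpr hmp) m
  | cons l w ih =>
    have hpw' : TopCountLE k (p ++ [l] ++ w) := by simpa using hpw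
    have hkj : k < j := by rw [hj]; simpa using List.count_pos_iff.mpr hmp
    rw [Aaut_evalFrom_cons, Astep_of_lt hkj]
    split_ifs with hlm hlm' h2k
    · have hp' : ∀ x ∈ p ++ [l], x ≤ m := by simpa [or_imp, forall_and] using ⟨hp, hlm.le⟩
      have hcount : (p ++ [l]).count m = p.count m := by simp [hlm.ne]
      exact ih hp' (by simp [hmp]) (hcount ▸ hj) hpw'
    · subst hlm'
      have hp' : ∀ x ∈ p ++ [l], x ≤ l := by simpa [or_imp, forall_and] using hp
      have := hpw' (p ++ [l]) (List.infix_append [] _ w) l hp'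
      simp only [List.count_append, List.count_singleton_self] at this
      omega
    · subst hlm'
      have hp' : ∀ x ∈ p ++ [l], x ≤ l := by simpa [or_imp, forall_and] using hp
      have hcount : (p ++ [l]).count l = p.count l + 1 := by simp
      exact ih hp' (by simp) (by omega) hpw'
    · have hsuf : [l] ++ w <:+: p ++ l :: w := by simpa using List.infix_append p (l :: w) []
      exact ih (p := [l]) (by simp) (by simp) (by simp) (hpw.of_infix hsuf)

theorem stmt_16_general (k n : ℕ) (i : ℕ) (u w : List ℕ)
    (hsuffix : W k n = u ++ i :: w) :
    ∀ f ∈ (Aaut k n).evalFrom {some (k + 1, i)} w, f ∉ (Aaut k n).accept := by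
  have hW : TopCountLE k ([i] ++ w) :=
    (topCountLE_W k n).of_infix ⟨u, [], by simp [hsuffix]⟩
  exact notMem_accept_of_topCountLE (p := [i]) (by simp) (by simp) (by simp) hW

/-- For any suffix `a_i w` of `W_{k,n}`, the word `w` is not accepted by
`A_{k,n}` from the state `(k+1; i)`. -/
theorem stmt_16 (k n : ℕ) (hk : 1 ≤ k) (hn : 1 ≤ n) (i : ℕ) (u w : List ℕ)
    (hsuffix : W k n = u ++ i :: w) :
    ∀ f ∈ (Aaut k n).evalFrom {some (k + 1, i)} w, f ∉ (Aaut k n).accept :=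
  stmt_16_general k n i u w hsuffix
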